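/- arXiv:2110.12306 — 2 statements merged into one kernel-verified Lean document; each statement's English description precedes it below -/
import Mathlib

section
/- Assume the finite discounted MDP setting. Let M ≥ 1, let w₀ ∈ ℝ^M, and let π : ℝ^M → (S → A → ℝ) be a parametric family such that π_w is a stationary policy for every w ∈ ℝ^M and, for every (s,a), the map w ↦ π_w(a|s) is Fréchet differentiable at w₀ with derivative D π(a|s) : ℝ^M → ℝ. For each w define the discounted state measure ρ_w(s) = Σ_j μ(j) ((I − γ P_{π_w})^{-1})(j,s). Fix v : S → ℝ and define L̃(w) = Σ_s μ(s) v(s) + Σ_{(s,a)} ρ_w(s) π_w(a|s) A_v(s,a). If v satisfies the Bellman equation for π_{w₀}, then L̃ is Fréchet differentiable at w₀ and its derivative is the linear map h ↦ Σ_{(s,a)} ρ_{w₀}(s) · (D π(a|s) h) · A_v(s,a). -/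
noncomputable section

variable {S A : Type*}

/-- A stationary policy: a probability vector over actions for every state. -/
def IsPolicy [Fintype A] (π : S → A → ℝ) : Prop :=
  ∀ s, (∀ a, 0 ≤ π s a) ∧ ∑ a, π s a = 1

/-- The advantage function `A_v(s,a) = Σ_{s'} P(s'|s,a)(r(s,a,s') + γ v(s')) − v(s)`. -/
def adv [Fintype S] (P : S → A → S → ℝ) (r : S → A → S → ℝ) (γ : ℝ)
    (v : S → ℝ) (s : S) (a : A) : ℝ :=
  (∑ s', P s a s' * (r s a s' + γ * v s')) - v s

/-- The state transition matrix `P_π(s,s') = Σ_a π(a|s) P(s'|s,a)` induced by a policy. -/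
def Pmat [Fintype A] (P : S → A → S → ℝ) (π : S → A → ℝ) : Matrix S S ℝ :=
  Matrix.of fun s s' => ∑ a, π s a * P s a s'

/-- The discounted state measure `ρ_π(s) = Σ_j μ(j) ((I − γ P_π)^{-1})(j,s)`. -/
def rho [Fintype S] [Fintype A] [DecidableEq S] (P : S → A → S → ℝ) (γ : ℝ)
    (μ : S → ℝ) (π : S → A → ℝ) (s : S) : ℝ :=
  ∑ j, μ j * (1 - γ • Pmat P π)⁻¹ j s

/-! Write `L̃(w) = Σ_s μ(s) v(s) + Σ_s ρ_w(s) f_w(s)` with `f_w(s) = Σ_a π_w(a|s) A_v(s,a)`.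
The Bellman equation for `π_{w₀}` says exactly that `f_{w₀} = 0`, so in the product rule for
`ρ_w(s) f_w(s)` the term involving the derivative of `ρ` drops out: `ρ` only has to be continuous
at `w₀`. It is, because `I − γ P_{π_{w₀}}` is strictly diagonally dominant, hence invertible, and
matrix inversion is continuous at invertible matrices. -/

open Asymptotics Topology Matrix

theorem HasFDerivAt.smul_of_continuousAt_of_eq_zero {𝕜 E F : Type*} [NontriviallyNormedField 𝕜]
    [NormedAddCommGroup E] [NormedSpace 𝕜 E] [NormedAddCommGroup F] [NormedSpace 𝕜 F]
    {g : E → 𝕜} {f : E → F} {f' : E →L[𝕜] F} {x : E}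
    (hg : ContinuousAt g x) (hf : HasFDerivAt f f' x) (hfx : f x = 0) :
    HasFDerivAt (fun y => g y • f y) (g x • f') x := by
  have hsmall : (fun y => (g y - g x) • f y) =o[𝓝 x] fun y => y - x := by
    have hg' : (fun y => g y - g x) =o[𝓝 x] fun _ => (1 : 𝕜) :=
      (isLittleO_one_iff 𝕜).2 (by simpa using hg.sub_const (g x))
    simpa [hfx] using hg'.smul_isBigO hf.isBigO_sub
  refine HasFDerivAt.of_isLittleO <|
    ((hf.const_smul (g x)).isLittleO.add hsmall).congr_left fun y => ?_
  simp only [hfx, FunLike.coe_smul, Pi.smul_apply, sub_smul, smul_zero]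
  abel

theorem Matrix.det_one_sub_smul_ne_zero_of_mem_rowStochastic {n : Type*} [Fintype n]
    [DecidableEq n] {Q : Matrix n n ℝ} (hQ : Q ∈ rowStochastic ℝ n) {γ : ℝ} (hγ : |γ| < 1) :
    (1 - γ • Q).det ≠ 0 := by
  refine det_ne_zero_of_sum_row_lt_diag fun k => ?_
  have hoff : ∑ j ∈ Finset.univ.erase k, ‖(1 - γ • Q) k j‖ = |γ| * (1 - Q k k) := by
    rw [← sum_row_of_mem_rowStochastic hQ k, ← Finset.add_sum_erase _ _ (Finset.mem_univ k),
      add_sub_cancel_left, Finset.mul_sum]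
    refine Finset.sum_congr rfl fun j hj => ?_
    rw [sub_apply, one_apply_ne (Finset.ne_of_mem_erase hj).symm, smul_apply, smul_eq_mul,
      zero_sub, norm_neg, Real.norm_eq_abs, abs_mul, abs_of_nonneg (nonneg_of_mem_rowStochastic hQ)]
  calc _ = |γ| * (1 - Q k k) := hoff
    _ < 1 - |γ| * Q k k := by linarith
    _ ≤ 1 - γ * Q k k := by
      nlinarith [le_abs_self γ, nonneg_of_mem_rowStochastic hQ (i := k) (j := k)]
    _ ≤ ‖(1 - γ • Q) k k‖ := by
      simpa [sub_apply, smul_apply] using le_abs_self (1 - γ * Q k k)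

theorem continuousAt_Pmat [Fintype A] {X : Type*} [TopologicalSpace X] (P : S → A → S → ℝ)
    {π : X → S → A → ℝ} {x : X} (hπ : ∀ s a, ContinuousAt (fun y => π y s a) x) :
    ContinuousAt (fun y => Pmat P (π y)) x :=
  continuousAt_pi.2 fun s => continuousAt_pi.2 fun _ =>
    tendsto_finsetSum _ fun a _ => (hπ s a).mul continuousAt_const

section Policy

variable [Fintype S] [Fintype A]

theorem Pmat_mem_rowStochastic [DecidableEq S] {P : S → A → S → ℝ}
    (hP : ∀ s a, (∀ s', 0 ≤ P s a s') ∧ ∑ s', P s a s' = 1) {π : S → A → ℝ} (hπ : IsPolicy π) :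
    Pmat P π ∈ rowStochastic ℝ S := by
  refine mem_rowStochastic_iff_sum.2 ⟨fun s s' => ?_, fun s => ?_⟩
  · exact Finset.sum_nonneg fun a _ => mul_nonneg ((hπ s).1 a) ((hP s a).1 s')
  · simp only [Pmat, of_apply]
    rw [Finset.sum_comm]
    simp [← Finset.mul_sum, (hP s _).2, (hπ s).2]

theorem continuousAt_rho [DecidableEq S] {X : Type*} [TopologicalSpace X] (P : S → A → S → ℝ)
    (γ : ℝ) (μ : S → ℝ) {π : X → S → A → ℝ} {x : X}
    (hπ : ∀ s a, ContinuousAt (fun y => π y s a) x) (hdet : (1 - γ • Pmat P (π x)).det ≠ 0)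
    (s : S) : ContinuousAt (fun y => rho P γ μ (π y) s) x := by
  have hinv : ContinuousAt (fun y => (1 - γ • Pmat P (π y))⁻¹) x := by
    refine (continuousAt_matrix_inv _ ?_).comp
      (continuousAt_const.sub ((continuousAt_Pmat P hπ).const_smul γ))
    rw [Ring.inverse_eq_inv']
    exact continuousAt_inv₀ hdet
  exact tendsto_finsetSum _ fun j _ => continuousAt_const.mul
    ((continuous_apply s).continuousAt.comp ((continuous_apply j).continuousAt.comp hinv))

theorem sum_mul_adv_eq_zero_of_bellman {P r : S → A → S → ℝ} {γ : ℝ} {v : S → ℝ}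
    {π : S → A → ℝ} {s : S} (hπ : ∑ a, π s a = 1)
    (hv : v s = ∑ a, π s a * ∑ s', P s a s' * (r s a s' + γ * v s')) :
    ∑ a, π s a * adv P r γ v s a = 0 := by
  simp only [adv, mul_sub, Finset.sum_sub_distrib, ← Finset.sum_mul, hπ, one_mul, ← hv, sub_self]

end Policy

theorem policy_gradient_of_approximate_lagrangian_general
    [Fintype S] [Fintype A] [DecidableEq S]
    (P : S → A → S → ℝ)
    (hP : ∀ s a, (∀ s', 0 ≤ P s a s') ∧ ∑ s', P s a s' = 1)
    (r : S → A → S → ℝ) (γ : ℝ) (hγ : 0 < γ ∧ γ < 1)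
    (μ : S → ℝ)
    (M : ℕ) (w₀ : Fin M → ℝ)
    (π : (Fin M → ℝ) → S → A → ℝ) (hπ : ∀ w, IsPolicy (π w))
    (Dπ : S → A → ((Fin M → ℝ) →L[ℝ] ℝ))
    (hdiff : ∀ s a, HasFDerivAt (fun w => π w s a) (Dπ s a) w₀)
    (v : S → ℝ)
    (hBellman : ∀ s, v s = ∑ a, π w₀ s a * ∑ s', P s a s' * (r s a s' + γ * v s')) :
    HasFDerivAt
      (fun w => (∑ s, μ s * v s) +
        ∑ s, ∑ a, rho P γ μ (π w) s * π w s a * adv P r γ v s a)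
      (∑ s, ∑ a, (rho P γ μ (π w₀) s * adv P r γ v s a) • Dπ s a) w₀ := by
  have hdet : (1 - γ • Pmat P (π w₀)).det ≠ 0 :=
    det_one_sub_smul_ne_zero_of_mem_rowStochastic (Pmat_mem_rowStochastic hP (hπ w₀))
      (abs_lt.2 ⟨by linarith, hγ.2⟩)
  have hρ := continuousAt_rho P γ μ (fun s a => (hdiff s a).continuousAt) hdet
  have hterm : ∀ s, HasFDerivAt (fun w => rho P γ μ (π w) s * ∑ a, π w s a * adv P r γ v s a)
      (rho P γ μ (π w₀) s • ∑ a, adv P r γ v s a • Dπ s a) w₀ := fun s =>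
    (HasFDerivAt.fun_sum fun a _ => (hdiff s a).mul_const (adv P r γ v s a))
      |>.smul_of_continuousAt_of_eq_zero (hρ s)
        (sum_mul_adv_eq_zero_of_bellman (hπ w₀ s).2 (hBellman s))
  have hsum := (HasFDerivAt.fun_sum (u := Finset.univ) fun s _ => hterm s).const_add (∑ s, μ s * v s)
  simp only [Finset.mul_sum, Finset.smul_sum, smul_smul, ← mul_assoc] at hsum
  exact hsum

/-- **Theorem 1, policy gradient.** If `v` satisfies the Bellman equation for
`π_{w₀}`, then `L̃(w) = Σ_s μ(s) v(s) + Σ_{(s,a)} ρ_w(s) π_w(a|s) A_v(s,a)` is Fréchet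
differentiable at `w₀` with derivative `h ↦ Σ_{(s,a)} ρ_{w₀}(s) (Dπ(a|s) h) A_v(s,a)`. -/
theorem policy_gradient_of_approximate_lagrangian
    [Fintype S] [Fintype A] [Nonempty S] [Nonempty A] [DecidableEq S]
    (P : S → A → S → ℝ)
    (hP : ∀ s a, (∀ s', 0 ≤ P s a s') ∧ ∑ s', P s a s' = 1)
    (r : S → A → S → ℝ) (γ : ℝ) (hγ : 0 < γ ∧ γ < 1)
    (μ : S → ℝ) (hμnn : ∀ s, 0 ≤ μ s) (hμsum : ∑ s, μ s = 1)
    (M : ℕ) (hM : 1 ≤ M) (w₀ : Fin M → ℝ)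
    (π : (Fin M → ℝ) → S → A → ℝ) (hπ : ∀ w, IsPolicy (π w))
    (Dπ : S → A → ((Fin M → ℝ) →L[ℝ] ℝ))
    (hdiff : ∀ s a, HasFDerivAt (fun w => π w s a) (Dπ s a) w₀)
    (v : S → ℝ)
    (hBellman : ∀ s, v s = ∑ a, π w₀ s a * ∑ s', P s a s' * (r s a s' + γ * v s')) :
    HasFDerivAt
      (fun w => (∑ s, μ s * v s) +
        ∑ s, ∑ a, rho P γ μ (π w) s * π w s a * adv P r γ v s a)
      (∑ s, ∑ a, (rho P γ μ (π w₀) s * adv P r γ v s a) • Dπ s a) w₀ :=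
  policy_gradient_of_approximate_lagrangian_general P hP r γ hγ μ M w₀ π hπ Dπ hdiff v hBellman
end
end

section
/- Let (Ω, 𝒢, ℙ) be a probability space with a filtration (ℱ_i)_{i∈ℕ}, let M ≥ 1, and let (X_{i+1})_{i∈ℕ} be ℝ^M-valued random vectors with X_{i+1} ℱ_{i+1}-measurable and square-integrable, and (Y_i)_{i∈ℕ} be ℝ^M-valued random vectors with Y_i ℱ_i-measurable and sup_i ‖Y_i(ω)‖ < ∞ for almost every ω. Suppose there is a constant L > 0 with E[‖X_{i+1}‖² | ℱ_i] ≤ L(1 + ‖Y_i‖²) almost surely for every i, and let (α_i)_{i≥1} be positive reals with Σ_i α_i² < ∞. Then Σ_i α_{i+1}² ‖X_{i+1}‖² < ∞ almost surely; in particular α_{i+1} · X_{i+1} → 0 almost surely as i → ∞. -/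
/-!
Truncate along the events `{‖Y j‖ ≤ K for all j ≤ i}`, which are `ℱ i`-measurable. On such an event
the conditional bound caps the integral of `‖X (i+1)‖²` by `L (1 + K²)`, so the expected truncated
weighted sum is at most `L (1 + K²) ∑ α²` and the truncated sum is finite almost surely. Almost every
`ω` has a bounded `Y`-path, hence lies in all these events once `K` is large, and there the truncation
changes nothing.
-/

open MeasureTheory Filter Topology

theorem ae_summable_of_summable_integral {Ω ι : Type*} [Countable ι] {mΩ : MeasurableSpace Ω}
    {μ : Measure Ω} {f : ι → Ω → ℝ} (hf : ∀ i, Integrable (f i) μ) (hf₀ : ∀ i, 0 ≤ᵐ[μ] f i)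
    (hsum : Summable fun i => ∫ ω, f i ω ∂μ) :
    ∀ᵐ ω ∂μ, Summable fun i => f i ω := by
  have hmeas : ∀ i, AEMeasurable (fun ω => ENNReal.ofReal (f i ω)) μ := fun i =>
    (hf i).aemeasurable.ennreal_ofReal
  have hfin : ∫⁻ ω, ∑' i, ENNReal.ofReal (f i ω) ∂μ ≠ ⊤ := by
    rw [lintegral_tsum hmeas]
    simp_rw [← ofReal_integral_eq_lintegral_ofReal (hf _) (hf₀ _)]
    rw [← ENNReal.ofReal_tsum_of_nonneg (fun i => integral_nonneg_of_ae (hf₀ i)) hsum]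
    exact ENNReal.ofReal_ne_top
  filter_upwards [ae_lt_top' (AEMeasurable.tsum hmeas) hfin, ae_all_iff.2 hf₀]
    with ω hω hω₀
  exact (ENNReal.summable_toReal hω.ne).congr fun i => ENNReal.toReal_ofReal (hω₀ i)

theorem setIntegral_le_of_ae_condExp_le {Ω : Type*} {m mΩ : MeasurableSpace Ω} {μ : Measure Ω}
    [IsFiniteMeasure μ] {f : Ω → ℝ} {s : Set Ω} {C : ℝ} (hm : m ≤ mΩ) (hf : Integrable f μ)
    (hs : MeasurableSet[m] s) (hC : ∀ᵐ ω ∂μ, ω ∈ s → μ[f|m] ω ≤ C) :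
    ∫ ω in s, f ω ∂μ ≤ μ.real s * C := by
  rw [← setIntegral_condExp hm hf hs, ← smul_eq_mul, ← setIntegral_const]
  exact setIntegral_mono_on_ae integrable_condExp.integrableOn integrableOn_const (hm s hs) hC

theorem measurableSet_forall_le_norm_le {Ω ι E : Type*} [Preorder ι] [Countable ι]
    {mΩ : MeasurableSpace Ω} [NormedAddCommGroup E] {ℱ : Filtration ι mΩ} {Y : ι → Ω → E}
    (hY : StronglyAdapted ℱ Y) (K : ℝ) (i : ι) : MeasurableSet[ℱ i] {ω | ∀ j ≤ i, ‖Y j ω‖ ≤ K} := by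
  simp only [Set.ofPred_forall]
  exact MeasurableSet.iInter fun j => MeasurableSet.iInter fun hj =>
    ((hY j).mono (ℱ.mono hj)).norm.measurable measurableSet_Iic

theorem ae_summable_of_ae_summable_indicator {Ω κ ι : Type*} [Countable κ]
    {mΩ : MeasurableSpace Ω} {μ : Measure Ω} {f : ι → Ω → ℝ} {s : κ → ι → Set Ω}
    (hf : ∀ K, ∀ᵐ ω ∂μ, Summable fun i => (s K i).indicator (f i) ω)
    (hs : ∀ᵐ ω ∂μ, ∃ K, ∀ i, ω ∈ s K i) :
    ∀ᵐ ω ∂μ, Summable fun i => f i ω := by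
  filter_upwards [ae_all_iff.2 hf, hs] with ω hω ⟨K, hK⟩
  exact (hω K).congr fun i => Set.indicator_of_mem (hK i) _

theorem tendsto_zero_of_summable_norm_sq {E : Type*} [SeminormedAddCommGroup E] {v : ℕ → E}
    (h : Summable fun i => ‖v i‖ ^ 2) : Tendsto v atTop (𝓝 0) := by
  rw [tendsto_zero_iff_norm_tendsto_zero]
  simpa [Real.sqrt_sq (norm_nonneg _)] using h.tendsto_atTop_zero.sqrt

theorem stepsize_weighted_noise_vanishes_general
    {Ω : Type*} {mΩ : MeasurableSpace Ω} (ℙ : Measure Ω) [IsProbabilityMeasure ℙ]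
    (ℱ : Filtration ℕ mΩ) (M : ℕ)
    (X : ℕ → Ω → EuclideanSpace ℝ (Fin M))
    (hXsq : ∀ i, MemLp (X (i + 1)) 2 ℙ)
    (Y : ℕ → Ω → EuclideanSpace ℝ (Fin M))
    (hYmeas : ∀ i, StronglyMeasurable[ℱ i] (Y i))
    (hYbdd : ∀ᵐ ω ∂ℙ, ∃ B : ℝ, ∀ i, ‖Y i ω‖ ≤ B)
    (L : ℝ) (hL : 0 < L)
    (hcond : ∀ i, ∀ᵐ ω ∂ℙ,
      (ℙ[fun ω' => ‖X (i + 1) ω'‖ ^ 2|ℱ i]) ω ≤ L * (1 + ‖Y i ω‖ ^ 2))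
    (α : ℕ → ℝ)
    (hαsq : Summable fun i => (α i) ^ 2) :
    (∀ᵐ ω ∂ℙ, Summable fun i => (α (i + 1)) ^ 2 * ‖X (i + 1) ω‖ ^ 2) ∧
    (∀ᵐ ω ∂ℙ, Tendsto (fun i => α (i + 1) • X (i + 1) ω) atTop (nhds 0)) := by
  have hα : Summable fun i => α (i + 1) ^ 2 := hαsq.comp_injective (add_left_injective 1)
  have hX : ∀ i, Integrable (fun ω => ‖X (i + 1) ω‖ ^ 2) ℙ := fun i =>
    (hXsq i).integrable_norm_pow two_ne_zero
  set s : ℝ → ℕ → Set Ω := fun K i => {ω | ∀ j ≤ i, ‖Y j ω‖ ≤ K}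
  have hs (K : ℝ) (i : ℕ) : MeasurableSet[ℱ i] (s K i) := measurableSet_forall_le_norm_le hYmeas K i
  have htrunc_moment (K : ℝ) (i : ℕ) : ∫ ω in s K i, ‖X (i + 1) ω‖ ^ 2 ∂ℙ ≤ L * (1 + K ^ 2) := by
    refine (setIntegral_le_of_ae_condExp_le (ℱ.le i) (hX i) (hs K i) ?_).trans
      (mul_le_of_le_one_left (by positivity) measureReal_le_one)
    filter_upwards [hcond i] with ω hω hωs
    exact hω.trans (by gcongr; exact hωs i le_rfl)
  have htrunc (K : ℕ) : ∀ᵐ ω ∂ℙ, Summable fun i =>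
      (s K i).indicator (fun ω => α (i + 1) ^ 2 * ‖X (i + 1) ω‖ ^ 2) ω := by
    have hnonneg (i : ℕ) : 0 ≤ (s K i).indicator (fun ω => α (i + 1) ^ 2 * ‖X (i + 1) ω‖ ^ 2) :=
      Set.indicator_nonneg fun _ _ => by positivity
    refine ae_summable_of_summable_integral
      (fun i => ((hX i).const_mul _).indicator (ℱ.le i _ (hs K i)))
      (fun i => ae_of_all _ (hnonneg i)) ?_
    refine Summable.of_nonneg_of_le (fun i => integral_nonneg (hnonneg i)) (fun i => ?_)
      (hα.mul_right (L * (1 + (K : ℝ) ^ 2)))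
    rw [integral_indicator (ℱ.le i _ (hs K i)), integral_const_mul]
    exact mul_le_mul_of_nonneg_left (htrunc_moment K i) (sq_nonneg _)
  have hsum : ∀ᵐ ω ∂ℙ, Summable fun i => α (i + 1) ^ 2 * ‖X (i + 1) ω‖ ^ 2 := by
    refine ae_summable_of_ae_summable_indicator htrunc ?_
    filter_upwards [hYbdd] with ω ⟨B, hB⟩
    exact ⟨⌈B⌉₊, fun i j _ => (hB j).trans (Nat.le_ceil B)⟩
  refine ⟨hsum, ?_⟩
  filter_upwards [hsum] with ω hω
  exact tendsto_zero_of_summable_norm_sq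
    (hω.congr fun i => by rw [norm_smul, mul_pow, Real.norm_eq_abs, sq_abs])

/-- **noise averaging.** Under a conditional second-moment bound driven by an
almost surely bounded adapted sequence, and square-summable step sizes, the step-size-weighted
squared noise norms are almost surely summable, and in particular the step-size-weighted noise
vanishes almost surely. -/
theorem stepsize_weighted_noise_vanishes
    {Ω : Type*} {mΩ : MeasurableSpace Ω} (ℙ : Measure Ω) [IsProbabilityMeasure ℙ]
    (ℱ : Filtration ℕ mΩ) (M : ℕ) (hM : 1 ≤ M)
    (X : ℕ → Ω → EuclideanSpace ℝ (Fin M))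
    (hXmeas : ∀ i, StronglyMeasurable[ℱ (i + 1)] (X (i + 1)))
    (hXsq : ∀ i, MemLp (X (i + 1)) 2 ℙ)
    (Y : ℕ → Ω → EuclideanSpace ℝ (Fin M))
    (hYmeas : ∀ i, StronglyMeasurable[ℱ i] (Y i))
    (hYbdd : ∀ᵐ ω ∂ℙ, ∃ B : ℝ, ∀ i, ‖Y i ω‖ ≤ B)
    (L : ℝ) (hL : 0 < L)
    (hcond : ∀ i, ∀ᵐ ω ∂ℙ,
      (ℙ[fun ω' => ‖X (i + 1) ω'‖ ^ 2|ℱ i]) ω ≤ L * (1 + ‖Y i ω‖ ^ 2))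
    (α : ℕ → ℝ) (hαpos : ∀ i, 1 ≤ i → 0 < α i)
    (hαsq : Summable fun i => (α i) ^ 2) :
    (∀ᵐ ω ∂ℙ, Summable fun i => (α (i + 1)) ^ 2 * ‖X (i + 1) ω‖ ^ 2) ∧
    (∀ᵐ ω ∂ℙ, Tendsto (fun i => α (i + 1) • X (i + 1) ω) atTop (nhds 0)) :=
  stepsize_weighted_noise_vanishes_general ℙ ℱ M X hXsq Y hYmeas hYbdd L hL hcond α hαsq
end
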